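/- For jointly distributed discrete random variables T and Z on a finite probability space, the Bayes error P_e := 1 − E_{z∼P_Z}[ max_t P(T = t | Z = z) ] satisfies P_e ≤ 1 − exp(−H(T | Z)), where H(T|Z) is the conditional Shannon entropy in nats. -/
import Mathlib


open Finset Real
open scoped Classical

noncomputable section

/-- Probability of an event on a finite space with pmf `p`. -/
def pr {Ω : Type*} [Fintype Ω] (p : Ω → ℝ) (E : Ω → Prop) : ℝ :=
  ∑ ω, if E ω then p ω else 0

/-- Conditional probability `P(A | B)`. -/
def cpr {Ω : Type*} [Fintype Ω] (p : Ω → ℝ) (A B : Ω → Prop) : ℝ :=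
  pr p (fun ω => A ω ∧ B ω) / pr p B

/-- Shannon entropy (nats) of a random variable `T`. -/
def entH {Ω α : Type*} [Fintype Ω] [Fintype α] (p : Ω → ℝ) (T : Ω → α) : ℝ :=
  -∑ t, pr p (fun ω => T ω = t) * Real.log (pr p (fun ω => T ω = t))

/-- Entropy of the conditional distribution of `T` given `Z = z`. -/
def condEntAt {Ω α β : Type*} [Fintype Ω] [Fintype α] (p : Ω → ℝ) (T : Ω → α)
    (Z : Ω → β) (z : β) : ℝ :=
  -∑ t, cpr p (fun ω => T ω = t) (fun ω => Z ω = z) *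
      Real.log (cpr p (fun ω => T ω = t) (fun ω => Z ω = z))

/-- Conditional Shannon entropy `H(T | Z)`. -/
def condEntH {Ω α β : Type*} [Fintype Ω] [Fintype α] [Fintype β] (p : Ω → ℝ) (T : Ω → α)
    (Z : Ω → β) : ℝ :=
  ∑ z, pr p (fun ω => Z ω = z) * condEntAt p T Z z

/-- Mutual information `I(T; V)` (nats), with the convention `0 log 0 = 0`. -/
def mi {Ω α β : Type*} [Fintype Ω] [Fintype α] [Fintype β] (p : Ω → ℝ) (T : Ω → α)
    (V : Ω → β) : ℝ :=
  ∑ t, ∑ v,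
    pr p (fun ω => T ω = t ∧ V ω = v) *
      Real.log (pr p (fun ω => T ω = t ∧ V ω = v) /
        (pr p (fun ω => T ω = t) * pr p (fun ω => V ω = v)))

/-- Conditional mutual information `I(C; X | V) = H(C|V) - H(C | (X,V))`. -/
def cmi {Ω α β γ : Type*} [Fintype Ω] [Fintype α] [Fintype β] [Fintype γ]
    (p : Ω → ℝ) (C : Ω → α) (X : Ω → β) (V : Ω → γ) : ℝ :=
  condEntH p C V - condEntH p C (fun ω => (X ω, V ω))

lemma pr_nonneg {Ω : Type*} [Fintype Ω] (p : Ω → ℝ) (hp : ∀ ω, 0 ≤ p ω) (E : Ω → Prop) :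
    0 ≤ pr p E := by
  apply Finset.sum_nonneg
  intro ω _
  split <;> simp [hp ω]

lemma cpr_nonneg {Ω : Type*} [Fintype Ω] (p : Ω → ℝ) (hp : ∀ ω, 0 ≤ p ω) (A B : Ω → Prop) :
    0 ≤ cpr p A B :=
  div_nonneg (pr_nonneg p hp _) (pr_nonneg p hp _)

/-- The max of a pmf is at least `exp (∑ q log q)`. -/
lemma key_sup {α : Type*} [Fintype α] [Nonempty α] (q : α → ℝ) (hq : ∀ t, 0 ≤ q t)
    (hs : ∑ t, q t = 1) :
    Real.exp (∑ t, q t * Real.log (q t)) ≤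
      Finset.univ.sup' Finset.univ_nonempty q := by
  set M := Finset.univ.sup' Finset.univ_nonempty q with hM
  have hMge : ∀ t, q t ≤ M := fun t => Finset.le_sup' q (Finset.mem_univ t)
  have hMpos : 0 < M := by
    obtain ⟨t, -, ht⟩ : ∃ t ∈ Finset.univ, 0 < q t := by
      by_contra h
      push_neg at h
      have : ∑ t, q t = 0 := Finset.sum_eq_zero fun t ht =>
        le_antisymm (h t ht) (hq t)
      rw [hs] at this; norm_num at this
    exact lt_of_lt_of_le ht (hMge t)
  have hstep : ∑ t, q t * Real.log (q t) ≤ Real.log M := by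
    calc ∑ t, q t * Real.log (q t) ≤ ∑ t, q t * Real.log M := by
          apply Finset.sum_le_sum
          intro t _
          rcases eq_or_lt_of_le (hq t) with h | h
          · simp [← h]
          · exact mul_le_mul_of_nonneg_left
              (Real.log_le_log h (hMge t)) (hq t)
      _ = Real.log M := by rw [← Finset.sum_mul, hs, one_mul]
  calc Real.exp (∑ t, q t * Real.log (q t)) ≤ Real.exp (Real.log M) :=
        Real.exp_le_exp.mpr hstep
    _ = M := Real.exp_log hMpos

lemma sum_cpr_eq_one {Ω 𝒯 𝒵 : Type*} [Fintype Ω] [Fintype 𝒯]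
    (p : Ω → ℝ) (T : Ω → 𝒯) (Z : Ω → 𝒵) (z : 𝒵)
    (hz : pr p (fun ω => Z ω = z) ≠ 0) :
    ∑ t, cpr p (fun ω => T ω = t) (fun ω => Z ω = z) = 1 := by
  have h : ∑ t, pr p (fun ω => T ω = t ∧ Z ω = z) = pr p (fun ω => Z ω = z) := by
    unfold pr
    rw [Finset.sum_comm]
    apply Finset.sum_congr rfl
    intro ω _
    by_cases hzz : Z ω = z <;>
      simp [hzz, Finset.sum_ite_eq, Finset.sum_ite_eq']
  unfold cpr
  rw [← Finset.sum_div, h, div_self hz]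

/-- Bayes error bound: `P_e ≤ 1 - exp (-H(T|Z))`. -/
theorem bayes_error_le {Ω 𝒯 𝒵 : Type*} [Fintype Ω] [Fintype 𝒯] [Fintype 𝒵] [Nonempty 𝒯]
    (p : Ω → ℝ) (hp : ∀ ω, 0 ≤ p ω) (hsum : ∑ ω, p ω = 1)
    (T : Ω → 𝒯) (Z : Ω → 𝒵) :
    1 - ∑ z, pr p (fun ω => Z ω = z) *
        Finset.univ.sup' Finset.univ_nonempty
          (fun t => cpr p (fun ω => T ω = t) (fun ω => Z ω = z)) ≤
      1 - Real.exp (-(condEntH p T Z)) := by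
  have hprz : ∀ z, 0 ≤ pr p (fun ω => Z ω = z) := fun z => pr_nonneg p hp _
  have hsumz : ∑ z, pr p (fun ω => Z ω = z) = 1 := by
    unfold pr
    rw [Finset.sum_comm]
    rw [← hsum]
    apply Finset.sum_congr rfl
    intro ω _
    simp
  have jensen : Real.exp (-(condEntH p T Z)) ≤
      ∑ z, pr p (fun ω => Z ω = z) * Real.exp (-(condEntAt p T Z z)) := by
    have := (convexOn_exp).map_sum_le (t := Finset.univ)
      (w := fun z => pr p (fun ω => Z ω = z))
      (p := fun z => -(condEntAt p T Z z))
      (fun z _ => hprz z) hsumz (fun z _ => Set.mem_univ _)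
    simpa [condEntH, Finset.mul_sum, Finset.sum_neg_distrib, neg_neg,
      Finset.sum_mul, mul_neg, ← Finset.sum_neg_distrib, smul_eq_mul] using this
  have step : ∀ z, pr p (fun ω => Z ω = z) * Real.exp (-(condEntAt p T Z z)) ≤
      pr p (fun ω => Z ω = z) *
        Finset.univ.sup' Finset.univ_nonempty
          (fun t => cpr p (fun ω => T ω = t) (fun ω => Z ω = z)) := by
    intro z
    rcases eq_or_lt_of_le (hprz z) with h | h
    · simp [← h]
    · apply mul_le_mul_of_nonneg_left _ (hprz z)
      have hne : pr p (fun ω => Z ω = z) ≠ 0 := ne_of_gt h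
      have := key_sup (fun t => cpr p (fun ω => T ω = t) (fun ω => Z ω = z))
        (fun t => cpr_nonneg p hp _ _) (sum_cpr_eq_one p T Z z hne)
      have harg : -(condEntAt p T Z z) =
          ∑ t, cpr p (fun ω => T ω = t) (fun ω => Z ω = z) *
            Real.log (cpr p (fun ω => T ω = t) (fun ω => Z ω = z)) := by
        simp [condEntAt]
      rw [harg]
      exact this
  calc 1 - ∑ z, pr p (fun ω => Z ω = z) *
        Finset.univ.sup' Finset.univ_nonempty
          (fun t => cpr p (fun ω => T ω = t) (fun ω => Z ω = z))
      ≤ 1 - ∑ z, pr p (fun ω => Z ω = z) * Real.exp (-(condEntAt p T Z z)) := by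
        apply sub_le_sub_left
        exact Finset.sum_le_sum fun z _ => step z
    _ ≤ 1 - Real.exp (-(condEntH p T Z)) := sub_le_sub_left jensen 1
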